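/- Let X be standard Cauchy. With E := exp(X − 1/2) and G := (exp(X − 1/2) + exp(−X − 1/2))/2, one has E/G = 2/(1 + e^{−2X}), log(E/G) ≤ log 2 and log(E/G) ≤ log 2 + 2X pointwise, and E[log(E/G)] = −∞ under the Cauchy distribution (since ∫_{−∞}^0 (log 2 + 2x)/(π(1+x²)) dx = −∞). -/

import Mathlib

open MeasureTheory ENNReal Filter Set
open scoped Classical
noncomputable section

/-- The positive part of an extended real, as an extended nonnegative real. -/
def erealPos (a : EReal) : ℝ≥0∞ := if a = ⊤ then ⊤ else ENNReal.ofReal a.toReal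

/-- Generalized expectation `E[f] = E[f⁺] - E[f⁻]`, valued in the extended reals. -/
def eexp {Ω : Type*} {mΩ : MeasurableSpace Ω} (μ : Measure Ω) (f : Ω → EReal) : EReal :=
  ((∫⁻ ω, erealPos (f ω) ∂μ : ℝ≥0∞) : EReal) - ((∫⁻ ω, erealPos (-(f ω)) ∂μ : ℝ≥0∞) : EReal)

/-- The standard Cauchy distribution on `ℝ`, with density `1/(π(1+x²))`. -/
def cauchyMeasure : Measure ℝ :=
  volume.withDensity fun x => ENNReal.ofReal (1 / (Real.pi * (1 + x ^ 2)))

/-!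
Since `E / G = eˣ / cosh x`, we have `log (E / G) = x - log (cosh x)`, and the two pointwise
bounds follow from `e^|x| / 2 ≤ cosh x`. As `cosh x ≥ 1`, also `log (E / G) ≤ x`, so the negative
part of `log (E / G)` dominates `X⁻`. Against the Cauchy density, `X⁻` integrates
`-x / (π (1 + x²))` over `x ≤ 0`, whose primitive `-log (1 + x²) / (2π)` is unbounded at `-∞`.
-/
lemma exp_sub_half_div_average_eq_exp_div_cosh (x : ℝ) :
    Real.exp (x - 1/2) / ((Real.exp (x - 1/2) + Real.exp (-x - 1/2)) / 2)
      = Real.exp x / Real.cosh x := by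
  rw [Real.cosh_eq, sub_eq_add_neg x, sub_eq_add_neg (-x), Real.exp_add, Real.exp_add,
    ← add_mul]
  field_simp

lemma exp_div_cosh_eq_two_div_one_add_exp (x : ℝ) :
    Real.exp x / Real.cosh x = 2 / (1 + Real.exp (-2 * x)) := by
  have h : Real.exp (-2 * x) = Real.exp (-x) / Real.exp x := by
    rw [← Real.exp_sub]; ring_nf
  rw [Real.cosh_eq, h]
  field_simp

lemma log_exp_div_cosh (x : ℝ) :
    Real.log (Real.exp x / Real.cosh x) = x - Real.log (Real.cosh x) := by
  rw [Real.log_div (Real.exp_pos x).ne' (Real.cosh_pos x).ne', Real.log_exp]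

lemma abs_sub_log_two_le_log_cosh (x : ℝ) : |x| - Real.log 2 ≤ Real.log (Real.cosh x) := by
  have h : Real.exp |x| ≤ 2 * Real.cosh x := by
    rw [← Real.cosh_abs, Real.cosh_eq]
    linarith [Real.exp_pos (-|x|)]
  have := Real.log_le_log (Real.exp_pos _) h
  rw [Real.log_exp, Real.log_mul two_ne_zero (Real.cosh_pos x).ne'] at this
  linarith

lemma erealPos_coe (r : ℝ) : erealPos r = ENNReal.ofReal r := by
  simp [erealPos]

/-- `EReal` subtraction has `x - ⊤ = ⊥` for every `x`, including `x = ⊤`. -/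
lemma eexp_eq_bot_of_le_of_lintegral_neg_eq_top {Ω : Type*} {mΩ : MeasurableSpace Ω}
    {μ : Measure Ω} {f g : Ω → ℝ}
    (hfg : ∀ ω, f ω ≤ g ω) (hg : ∫⁻ ω, ENNReal.ofReal (-g ω) ∂μ = ∞) :
    eexp μ (fun ω => (f ω : EReal)) = ⊥ := by
  have hf : ∫⁻ ω, erealPos (-(f ω : EReal)) ∂μ = ∞ := by
    refine eq_top_mono (lintegral_mono fun ω => ?_) hg
    rw [← EReal.coe_neg, erealPos_coe]
    exact ENNReal.ofReal_le_ofReal (neg_le_neg (hfg ω))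
  rw [eexp, hf, EReal.coe_ennreal_top, EReal.sub_top]

lemma not_integrableOn_Iic_div_one_add_sq (a : ℝ) :
    ¬ IntegrableOn (fun x : ℝ => x / (1 + x ^ 2)) (Iic a) := by
  have hderiv : ∀ x : ℝ,
      HasDerivAt (fun x => Real.log (1 + x ^ 2) / 2) (x / (1 + x ^ 2)) x := by
    intro x
    refine ((((hasDerivAt_pow 2 x).const_add 1).log (by positivity)).div_const 2).congr_deriv ?_
    norm_num
    field_simp
  have hsq : Tendsto (fun x : ℝ => 1 + x ^ 2) atBot atTop := by
    refine tendsto_atTop_add_const_left _ 1 ?_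
    simpa [sq] using tendsto_id.atBot_mul_atBot₀ tendsto_id
  have hlog : Tendsto (fun x : ℝ => ‖Real.log (1 + x ^ 2) / 2‖) atBot atTop :=
    tendsto_norm_atTop_atTop.comp ((Real.tendsto_log_atTop.comp hsq).atTop_div_const two_pos)
  refine not_integrableOn_of_tendsto_norm_atTop_of_deriv_isBigO_filter atBot (Iic_mem_atBot a)
    (Eventually.of_forall fun x => (hderiv x).differentiableAt) hlog ?_
  rw [funext fun x => (hderiv x).deriv]
  exact Asymptotics.isBigO_refl _ _

lemma lintegral_ofReal_neg_cauchyMeasure : ∫⁻ x, ENNReal.ofReal (-x) ∂cauchyMeasure = ∞ := by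
  refine eq_top_mono (setLIntegral_le_lintegral (Iic 0) _) ?_
  have hdens : Measurable fun x : ℝ => ENNReal.ofReal (1 / (Real.pi * (1 + x ^ 2))) := by
    fun_prop
  rw [cauchyMeasure, setLIntegral_withDensity_eq_setLIntegral_mul _ hdens (by fun_prop)
    measurableSet_Iic]
  simp only [Pi.mul_apply,
    ← ENNReal.ofReal_mul (by positivity : (0 : ℝ) ≤ 1 / (Real.pi * (1 + _ ^ 2)))]
  by_contra hfin
  have hint : IntegrableOn (fun x : ℝ => 1 / (Real.pi * (1 + x ^ 2)) * -x) (Iic 0) :=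
    (lintegral_ofReal_ne_top_iff_integrable (by fun_prop)
      (ae_restrict_of_forall_mem measurableSet_Iic fun _ hx =>
        mul_nonneg (by positivity) (neg_nonneg.2 hx))).1 hfin
  refine not_integrableOn_Iic_div_one_add_sq 0 (IntegrableOn.congr_fun
    (hint.const_mul (-Real.pi)) (fun x _ => ?_) measurableSet_Iic)
  field_simp

/-- Cauchy example: with `E = exp(X − 1/2)` and `G = (exp(X − 1/2) + exp(−X − 1/2))/2`,
one has `E/G = 2/(1 + e^{−2X})`, `log(E/G) ≤ log 2` and `log(E/G) ≤ log 2 + 2X`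
pointwise, and `E[log(E/G)] = −∞` under the standard Cauchy distribution. -/
theorem rao_blackwell_stmt13
    (Efun Gfun : ℝ → ℝ)
    (hEfun : ∀ x, Efun x = Real.exp (x - 1/2))
    (hGfun : ∀ x, Gfun x = (Real.exp (x - 1/2) + Real.exp (-x - 1/2)) / 2) :
    (∀ x, Efun x / Gfun x = 2 / (1 + Real.exp (-2 * x))) ∧
    (∀ x, Real.log (Efun x / Gfun x) ≤ Real.log 2) ∧
    (∀ x, Real.log (Efun x / Gfun x) ≤ Real.log 2 + 2 * x) ∧
    eexp cauchyMeasure (fun x => ((Real.log (Efun x / Gfun x) : ℝ) : EReal)) = ⊥ := by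
  have hratio (x : ℝ) : Efun x / Gfun x = Real.exp x / Real.cosh x := by
    rw [hEfun, hGfun, exp_sub_half_div_average_eq_exp_div_cosh]
  have hlog (x : ℝ) : Real.log (Efun x / Gfun x) = x - Real.log (Real.cosh x) := by
    rw [hratio, log_exp_div_cosh]
  refine ⟨fun x => by rw [hratio, exp_div_cosh_eq_two_div_one_add_exp],
    fun x => ?_, fun x => ?_, ?_⟩
  · linarith [hlog x, abs_sub_log_two_le_log_cosh x, le_abs_self x]
  · linarith [hlog x, abs_sub_log_two_le_log_cosh x, neg_abs_le x]
  · refine eexp_eq_bot_of_le_of_lintegral_neg_eq_top (fun x => ?_)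
      lintegral_ofReal_neg_cauchyMeasure
    linarith [hlog x, Real.log_nonneg (Real.one_le_cosh x)]
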